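/- arXiv:2411.10289 — 5 statements merged into one kernel-verified Lean document; each statement's English description precedes it below -/
import Mathlib

section
/- Let (q^r) be a sequence in a set Q defined by q^{r+2} = g(q^{r+1}, q^r), and suppose q^{r+L} = q^r for all r ≥ ℓ - 1, where ℓ, L are positive integers. Define states on the directed ring of L nodes by s_i(0) = q^{i+ℓ} for i ∈ {0,...,L-1}, and the synchronous update s_i(t+1) = g(s_i(t), s_{(i-1) mod L}(t)). Then for all t ∈ ℕ and all i ∈ {0,...,L-1}, s_i(t) = q^{i+ℓ+t}. -/
theorem stmt_4 {Q : Type*} (g : Q → Q → Q) (q : ℕ → Q) (ℓ L : ℕ)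
    (hℓ : 0 < ℓ) (hL : 0 < L)
    (hq : ∀ r, q (r + 2) = g (q (r + 1)) (q r))
    (hper : ∀ r, ℓ - 1 ≤ r → q (r + L) = q r)
    (s : ℕ → ℕ → Q)
    (h0 : ∀ i < L, s 0 i = q (i + ℓ))
    (hstep : ∀ t, ∀ i < L, s (t + 1) i = g (s t i) (s t ((i + L - 1) % L))) :
    ∀ t, ∀ i < L, s t i = q (i + ℓ + t) := by
  obtain ⟨m, rfl⟩ : ∃ m, ℓ = m + 1 := ⟨ℓ - 1, by omega⟩
  intro t
  induction t with
  | zero => simpa using h0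
  | succ t ih =>
    intro i hi
    have hprev : (i + L - 1) % L < L := Nat.mod_lt _ hL
    rw [hstep t i hi, ih i hi, ih _ hprev]
    rcases Nat.eq_zero_or_pos i with rfl | hpos
    · have h1 : (0 + L - 1) % L = L - 1 := by
        rw [Nat.zero_add, Nat.mod_eq_of_lt (by omega)]
      rw [h1]
      have h2 : L - 1 + (m + 1) + t = (m + t) + L := by omega
      rw [h2, hper (m + t) (by omega)]
      have h3 : 0 + (m + 1) + (t + 1) = (m + t) + 2 := by omega
      have h4 : 0 + (m + 1) + t = (m + t) + 1 := by omega
      rw [h3, h4, hq]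
    · have h1 : (i + L - 1) % L = i - 1 := by
        rw [show i + L - 1 = (i - 1) + L by omega, Nat.add_mod_right,
          Nat.mod_eq_of_lt (by omega)]
      rw [h1]
      have h3 : i + (m + 1) + (t + 1) = (i - 1 + (m + 1) + t) + 2 := by omega
      have h4 : i + (m + 1) + t = (i - 1 + (m + 1) + t) + 1 := by omega
      rw [h3, h4, hq]
end

section
/- Under the directed-ring dynamics s_i(t+1) = g(s_i(t), s_{(i-1) mod L}(t)) with initial states s_i(0) = q^{i+ℓ}, where (q^r) satisfies q^{r+2} = g(q^{r+1}, q^r) and is L-periodic from index ℓ-1, one has s_1(t) = s_0(t+1) for all t ∈ ℕ. -/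
theorem stmt_5 {Q : Type*} (g : Q → Q → Q) (q : ℕ → Q) (ℓ L : ℕ)
    (hℓ : 0 < ℓ) (hL : 2 ≤ L)
    (hq : ∀ r, q (r + 2) = g (q (r + 1)) (q r))
    (hper : ∀ r, ℓ - 1 ≤ r → q (r + L) = q r)
    (s : ℕ → ℕ → Q)
    (h0 : ∀ i < L, s 0 i = q (i + ℓ))
    (hstep : ∀ t, ∀ i < L, s (t + 1) i = g (s t i) (s t ((i + L - 1) % L))) :
    ∀ t, s t 1 = s (t + 1) 0 := by
  obtain ⟨m, rfl⟩ : ∃ m, ℓ = m + 1 := ⟨ℓ - 1, by omega⟩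
  have key : ∀ t, ∀ i < L, s t i = q (i + (m + 1) + t) := by
    intro t
    induction t with
    | zero => intro i hi; simpa using h0 i hi
    | succ t ih =>
      intro i hi
      rcases i with _ | i
      · have hL1 : L - 1 < L := by omega
        rw [hstep t 0 (by omega)]
        have : (0 + L - 1) % L = L - 1 := by
          rw [Nat.zero_add, Nat.mod_eq_of_lt hL1]
        rw [this, ih 0 (by omega), ih (L - 1) hL1]
        have hp : q (m + t + L) = q (m + t) := hper (m + t) (by omega)
        have he : L - 1 + (m + 1) + t = m + t + L := by omega
        rw [he, hp]
        rw [show (0:ℕ) + (m + 1) + (t + 1) = m + t + 2 from by omega,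
          show (0:ℕ) + (m + 1) + t = m + t + 1 from by omega]
        exact (hq (m + t)).symm
      · rw [hstep t (i + 1) hi]
        have : (i + 1 + L - 1) % L = i := by
          rw [show i + 1 + L - 1 = i + L by omega, Nat.add_mod_right,
            Nat.mod_eq_of_lt (by omega)]
        rw [this, ih (i + 1) hi, ih i (by omega)]
        rw [show i + 1 + (m + 1) + (t + 1) = i + (m + 1) + t + 2 from by omega,
          show i + 1 + (m + 1) + t = i + (m + 1) + t + 1 from by omega]
        exact (hq (i + (m + 1) + t)).symm
  intro t
  rw [key t 1 (by omega), key (t + 1) 0 (by omega)]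
  ring_nf
end

section
/- For any finite set Q, any function g : Q × Q → Q, any P > 1, and any clock map C : Q → ℤ/Pℤ, there is no way for the states on a suitable directed ring (defined from a second-order g-recurrence, with size equal to an eventual period of the recurrence) to eventually satisfy both C(s_i(t)) = C(s_j(t)) for all nodes i, j and C(s_i(t+1)) = C(s_i(t)) + 1, for all sufficiently large t. That is, self-stabilizing mod-P clock synchronization is impossible with a bounded state set on the class of directed rings of all sizes. -/
private def seqx {Q : Type*} (g : Q → Q → Q) (q0 : Q) : ℕ → Q
  | 0 => q0
  | 1 => q0
  | (n+2) => g (seqx g q0 (n+1)) (seqx g q0 n)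

private lemma seqx_iter {Q : Type*} (g : Q → Q → Q) (q0 : Q) (n : ℕ) :
    (fun p : Q × Q => (p.2, g p.2 p.1))^[n] (q0, q0)
      = (seqx g q0 n, seqx g q0 (n+1)) := by
  induction n with
  | zero => rfl
  | succ n ih =>
    rw [Function.iterate_succ_apply', ih]
    rfl

theorem stmt_7 {Q : Type*} [Fintype Q] [Nonempty Q] (g : Q → Q → Q)
    (P : ℕ) (hP : 1 < P) (C : Q → ZMod P) :
    ¬ (∀ L : ℕ, 0 < L → ∀ s : ℕ → ℕ → Q,
        (∀ t, ∀ i < L, s (t + 1) i = g (s t i) (s t ((i + L - 1) % L))) →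
        ∃ t₀ : ℕ, ∀ t, t₀ ≤ t →
          (∀ i < L, ∀ j < L, C (s t i) = C (s t j)) ∧
          (∀ i < L, C (s (t + 1) i) = C (s t i) + 1)) := by
  intro H
  classical
  obtain ⟨q0⟩ := ‹Nonempty Q›
  set x : ℕ → Q := seqx g q0 with hx
  set f : Q × Q → Q × Q := fun p => (p.2, g p.2 p.1) with hf
  set y : ℕ → Q × Q := fun n => f^[n] (q0, q0) with hy
  have hyx : ∀ n, y n = (x n, x (n+1)) := fun n => seqx_iter g q0 n
  -- pigeonhole: y is not injective
  obtain ⟨a, b, hab, heq⟩ := Finite.exists_ne_map_eq_of_infinite y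
  wlog hlt : a < b generalizing a b
  · exact this b a hab.symm heq.symm (by omega)
  set N := a
  set p := b - a with hp
  have hppos : 0 < p := by omega
  have hyNp : y (N + p) = y N := by
    have : N + p = b := by omega
    rw [this]; exact heq.symm
  have hyper : ∀ k, y (N + k + p) = y (N + k) := by
    intro k
    have h1 : ∀ m k : ℕ, y (m + k) = f^[k] (y m) := by
      intro m k
      simp [hy, ← Function.iterate_add_apply, Nat.add_comm]
    calc y (N + k + p) = y (N + p + k) := by ring_nf
      _ = f^[k] (y (N + p)) := h1 _ _
      _ = f^[k] (y N) := by rw [hyNp]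
      _ = y (N + k) := (h1 _ _).symm
  have hxper : ∀ k, x (N + k + p) = x (N + k) := by
    intro k
    have := hyper k
    rw [hyx, hyx] at this
    exact congrArg Prod.fst this
  -- the traveling-wave configuration on a ring of size p
  set s : ℕ → ℕ → Q := fun t i => x (N + 1 + t + i) with hs
  have hrec : ∀ t, ∀ i < p, s (t + 1) i = g (s t i) (s t ((i + p - 1) % p)) := by
    intro t i hi
    have hstep : ∀ m, x (m + 2) = g (x (m + 1)) (x m) := fun m => rfl
    rcases Nat.eq_zero_or_pos i with hi0 | hipos
    · subst hi0
      have hmod : (0 + p - 1) % p = p - 1 := by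
        have : 0 + p - 1 = p - 1 := by omega
        rw [this, Nat.mod_eq_of_lt (by omega)]
      have h2 : s t ((0 + p - 1) % p) = x (N + t + p) := by
        rw [hmod]
        show x (N + 1 + t + (p - 1)) = x (N + t + p)
        congr 1; omega
      have h3 : x (N + t + p) = x (N + t) := hxper t
      have h4 : s (t + 1) 0 = x (N + t + 2) := by
        show x (N + 1 + (t + 1) + 0) = x (N + t + 2); congr 1; omega
      have h5 : s t 0 = x (N + t + 1) := by
        show x (N + 1 + t + 0) = x (N + t + 1); congr 1; omega
      rw [h4, h2, h3, h5, hstep]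
    · have hmod : (i + p - 1) % p = i - 1 := by
        have h1 : i + p - 1 = p + (i - 1) := by omega
        rw [h1, Nat.add_mod_left, Nat.mod_eq_of_lt (by omega)]
      have h2 : s t ((i + p - 1) % p) = x (N + t + i) := by
        rw [hmod]
        show x (N + 1 + t + (i - 1)) = x (N + t + i)
        congr 1; omega
      have h4 : s (t + 1) i = x (N + t + i + 2) := by
        show x (N + 1 + (t + 1) + i) = x (N + t + i + 2); congr 1; omega
      have h5 : s t i = x (N + t + i + 1) := by
        show x (N + 1 + t + i) = x (N + t + i + 1); congr 1; omega
      rw [h4, h2, h5, hstep]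
  obtain ⟨t₀, hspec⟩ := H p hppos s hrec
  -- increase along the wave
  have hinc : ∀ k, C (x (N + 1 + t₀ + k + 1)) = C (x (N + 1 + t₀ + k)) + 1 := by
    intro k
    have h := (hspec (t₀ + k) (by omega)).2 0 hppos
    have h1 : s (t₀ + k + 1) 0 = x (N + 1 + t₀ + k + 1) := by
      show x (N + 1 + (t₀ + k + 1) + 0) = _; congr 1; omega
    have h2 : s (t₀ + k) 0 = x (N + 1 + t₀ + k) := by
      show x (N + 1 + (t₀ + k) + 0) = _; congr 1; omega
    rwa [h1, h2] at h
  have hsum : ∀ k, C (x (N + 1 + t₀ + k)) = C (x (N + 1 + t₀)) + (k : ZMod P) := by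
    intro k
    induction k with
    | zero => simp
    | succ k ih =>
      have harg : N + 1 + t₀ + (k + 1) = N + 1 + t₀ + k + 1 := by omega
      rw [harg, hinc k, ih]; push_cast; ring
  have hP0 : (p : ZMod P) = 0 := by
    have h1 := hsum p
    have h2 : x (N + 1 + t₀ + p) = x (N + 1 + t₀) := by
      have h := hxper (1 + t₀)
      have e1 : N + (1 + t₀) + p = N + 1 + t₀ + p := by omega
      have e2 : N + (1 + t₀) = N + 1 + t₀ := by omega
      rwa [e1, e2] at h
    rw [h2] at h1
    exact (left_eq_add.mp h1).symm ▸ rfl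
  have hPdvd : P ∣ p := by
    haveI : NeZero P := ⟨by omega⟩
    exact (ZMod.natCast_eq_zero_iff p P).mp hP0
  have hp2 : 1 < p := lt_of_lt_of_le hP (Nat.le_of_dvd hppos hPdvd)
  -- equality across nodes 0 and 1 at time t₀
  have heq01 := (hspec t₀ le_rfl).1 0 hppos 1 hp2
  have h1 : s t₀ 1 = x (N + 1 + t₀ + 1) := rfl
  have h0 : s t₀ 0 = x (N + 1 + t₀) := by
    show x (N + 1 + t₀ + 0) = _; congr 1
  rw [h0, h1] at heq01
  have := hinc 0
  rw [show N + 1 + t₀ + 0 = N + 1 + t₀ from rfl] at this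
  rw [← heq01] at this
  have h10 : (1 : ZMod P) = 0 := by
    have := (add_eq_left (a := C (x (N + 1 + t₀)))).mp this.symm
    exact this
  haveI : NeZero P := ⟨by omega⟩
  have hd := (ZMod.natCast_eq_zero_iff 1 P).mp (by exact_mod_cast h10)
  have := Nat.le_of_dvd one_pos hd
  omega
end

section
/- In the directed ring of size n with update s_i(t+1) = g(s_i(t), s_{(i-1) mod n}(t)), where initial states are s_i(0) = q^{i+ℓ} and (q^r) satisfies q^{r+2} = g(q^{r+1}, q^r) with q^{r+L} = q^r for r ≥ ℓ-1 and L ≤ n, one has for every t ∈ {1,...,n-1} and every j ∈ {t, t+1, ..., n-1}: s_j(t) = q^{ℓ + t + j}. -/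
theorem stmt_10 {Q : Type*} (g : Q → Q → Q) (q : ℕ → Q) (ℓ L n : ℕ)
    (hℓ : 0 < ℓ) (hL : 0 < L) (hLn : L ≤ n)
    (hq : ∀ r, q (r + 2) = g (q (r + 1)) (q r))
    (hper : ∀ r, ℓ - 1 ≤ r → q (r + L) = q r)
    (s : ℕ → ℕ → Q)
    (h0 : ∀ i < n, s 0 i = q (i + ℓ))
    (hstep : ∀ t, ∀ i < n, s (t + 1) i = g (s t i) (s t ((i + n - 1) % n))) :
    ∀ t, 1 ≤ t → t ≤ n - 1 → ∀ j, t ≤ j → j ≤ n - 1 → s t j = q (ℓ + t + j) := by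
  intro t
  induction t with
  | zero => omega
  | succ t ih =>
    intro h1 h2 j hj1 hj2
    have hn : 2 ≤ n := by omega
    have hjn : j < n := by omega
    have hmod : (j + n - 1) % n = j - 1 := by
      have h : j + n - 1 = (j - 1) + n := by omega
      rw [h, Nat.add_mod_right, Nat.mod_eq_of_lt (by omega)]
    rw [hstep t j hjn, hmod]
    rcases Nat.eq_zero_or_pos t with ht0 | ht1
    · subst ht0
      rw [h0 j hjn, h0 (j - 1) (by omega)]
      have := hq (j - 1 + ℓ)
      have e1 : j - 1 + ℓ + 2 = ℓ + 1 + j := by omega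
      have e2 : j - 1 + ℓ + 1 = j + ℓ := by omega
      rw [e1, e2] at this
      exact this.symm
    · rw [ih (by omega) (by omega) j (by omega) hj2,
        ih (by omega) (by omega) (j - 1) (by omega) (by omega)]
      have := hq (ℓ + t + (j - 1))
      have e1 : ℓ + t + (j - 1) + 2 = ℓ + (t + 1) + j := by omega
      have e2 : ℓ + t + (j - 1) + 1 = ℓ + t + j := by omega
      rw [e1, e2] at this
      exact this.symm
end

section
/- Any self-stabilizing algorithm achieving mod-P synchronization (P > 1) in static strongly connected networks with at most n nodes (n ≥ 4) has worst-case synchronization time at least n - 2 rounds. Abstract core: in the size-n directed ring with initial states q^{ℓ+i}, we have s_{n-1}(n-3) = s_{n-2}(n-2); hence if clocks were synchronized by round n-3, then C(s_{n-1}(n-3)) ≡ C(s_{n-2}(n-3)), C(s_{n-1}(n-2)) ≡ C(s_{n-2}(n-2)), and C(s_{n-1}(n-2)) ≡ C(s_{n-1}(n-3)) + 1 mod P, which together contradict the state equality. -/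
theorem stmt_11 {Q : Type*} (g : Q → Q → Q) (q : ℕ → Q) (ℓ L n P : ℕ)
    (hP : 1 < P) (hn : 4 ≤ n)
    (hℓ : 0 < ℓ) (hL : 0 < L) (hLn : L ≤ n)
    (hq : ∀ r, q (r + 2) = g (q (r + 1)) (q r))
    (hper : ∀ r, ℓ - 1 ≤ r → q (r + L) = q r)
    (C : Q → ZMod P)
    (s : ℕ → ℕ → Q)
    (h0 : ∀ i < n, s 0 i = q (i + ℓ))
    (hstep : ∀ t, ∀ i < n, s (t + 1) i = g (s t i) (s t ((i + n - 1) % n)))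
    (hsync : ∀ t, n - 3 ≤ t →
        (∀ i < n, ∀ j < n, C (s t i) = C (s t j)) ∧
        (∀ i < n, C (s (t + 1) i) = C (s t i) + 1)) : False := by
  have key : ∀ t, ∀ i, t ≤ i → i < n → s t i = q (i + ℓ + t) := by
    intro t
    induction t with
    | zero => intro i _ hi; simpa using h0 i hi
    | succ t ih =>
      intro i hti hi
      have hi1 : 1 ≤ i := by omega
      rw [hstep t i hi]
      have hmod : (i + n - 1) % n = i - 1 := by
        have h : i + n - 1 = (i - 1) + n := by omega
        rw [h, Nat.add_mod_right, Nat.mod_eq_of_lt (by omega)]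
      rw [hmod, ih i (by omega) hi, ih (i - 1) (by omega) (by omega)]
      have := hq (i - 1 + ℓ + t)
      have e1 : i - 1 + ℓ + t + 1 = i + ℓ + t := by omega
      have e2 : i - 1 + ℓ + t + 2 = i + ℓ + (t + 1) := by omega
      rw [e1, e2] at this
      exact this.symm
  have hA := key (n - 3) (n - 1) (by omega) (by omega)
  have hB := key (n - 2) (n - 2) (by omega) (by omega)
  have heq : s (n - 3) (n - 1) = s (n - 2) (n - 2) := by
    rw [hA, hB]; congr 1; omega
  have h1 := (hsync (n - 3) le_rfl).1 (n - 1) (by omega) (n - 2) (by omega)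
  have h2 := (hsync (n - 3) le_rfl).2 (n - 2) (by omega)
  have h3 : n - 3 + 1 = n - 2 := by omega
  rw [h3, ← heq, h1] at h2
  have hone : (1 : ZMod P) = 0 := by
    have := left_eq_add.mp h2
    exact this
  haveI : Fact (1 < P) := ⟨hP⟩
  exact one_ne_zero hone
end
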